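/- arXiv:2304.05914 — 7 statements merged into one kernel-verified Lean document; each statement's English description precedes it below -/
import Mathlib

section
/- Let A be a k-algebra whose center is exactly k. Then A is universally cancellative; in particular A is cancellative. -/
open TensorProduct

universe u

/-- Iterated polynomial extension `A[t₁,…,tₙ]` of a (possibly noncommutative) algebra. -/
noncomputable def PolyIterAux (A : Type u) [Ring A] : ℕ → (T : Type u) × Ring T
  | 0 => ⟨A, inferInstance⟩
  | n + 1 =>
    letI := (PolyIterAux A n).2
    ⟨Polynomial (PolyIterAux A n).1, inferInstance⟩

noncomputable def PolyIter (A : Type u) [Ring A] (n : ℕ) : Type u := (PolyIterAux A n).1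

noncomputable instance instRingPolyIter (A : Type u) [Ring A] (n : ℕ) : Ring (PolyIter A n) :=
  (PolyIterAux A n).2

noncomputable def algPolyIterAux (k A : Type u) [CommSemiring k] [Ring A] [Algebra k A] :
    (n : ℕ) → Algebra k (PolyIter A n)
  | 0 => inferInstanceAs (Algebra k A)
  | n + 1 =>
    letI := algPolyIterAux k A n
    inferInstanceAs (Algebra k (Polynomial (PolyIter A n)))

noncomputable instance instAlgebraPolyIter (k A : Type u) [CommSemiring k] [Ring A] [Algebra k A] (n : ℕ) :
    Algebra k (PolyIter A n) := algPolyIterAux k A n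

/-- `A` is cancellative: `A[t] ≅ B[t]` implies `A ≅ B`. -/
def IsCancellative (k : Type u) [Field k] (A : Type u) [Ring A] [Algebra k A] : Prop :=
  ∀ (B : Type u) [Ring B] [Algebra k B],
    Nonempty (Polynomial A ≃ₐ[k] Polynomial B) → Nonempty (A ≃ₐ[k] B)

/-- `A` is strongly cancellative: for each `n ≥ 1`,
`A[t₁,…,tₙ] ≅ B[t₁,…,tₙ]` implies `A ≅ B`. -/
def IsStronglyCancellative (k : Type u) [Field k] (A : Type u) [Ring A] [Algebra k A] : Prop :=
  ∀ (n : ℕ), 1 ≤ n → ∀ (B : Type u) [Ring B] [Algebra k B],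
    Nonempty (PolyIter A n ≃ₐ[k] PolyIter B n) → Nonempty (A ≃ₐ[k] B)

/-- `A` is universally cancellative: for every affine commutative `k`-domain `R`
admitting a `k`-algebra map `R → k`, and every `k`-algebra `B`,
`A ⊗[k] R ≅ B ⊗[k] R` implies `A ≅ B`. -/
def IsUniversallyCancellative (k : Type u) [Field k] (A : Type u) [Ring A] [Algebra k A] : Prop :=
  ∀ (R : Type u) [CommRing R] [IsDomain R] [Algebra k R],
    Algebra.FiniteType k R → (∃ f : R →ₐ[k] k, Function.Surjective f) →
    ∀ (B : Type u) [Ring B] [Algebra k B],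
      Nonempty ((A ⊗[k] R) ≃ₐ[k] (B ⊗[k] R)) → Nonempty (A ≃ₐ[k] B)

/-!
Because `Z(A) = k`, the center of `A ⊗ R` is `1 ⊗ R`, and an isomorphism `φ : A ⊗ R ≃ B ⊗ R`
identifies centers, so `ρ : Z(B) ⊗ R ≅ R`. A character of `R` pulls back to a character `g` of
`Z(B)`, and specialising at `g` is a map `Z(B) ⊗ R → R` which, precomposed with `ρ⁻¹`, is a
surjective endomorphism of the noetherian ring `R`; it must be injective, which forces
`Z(B) = k`. Now `φ` maps `1 ⊗ R` onto `1 ⊗ R` through an automorphism `ψ` of `R`, so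
specialising at a character `f` of `R` on the left and at `f ∘ ψ⁻¹` on the right turns `φ` into
an isomorphism `A ≃ B`. Cancellativity is the case `R = k[t]`.
-/

open Algebra.TensorProduct

theorem RingHom.injective_of_surjective_of_isNoetherianRing {R : Type*} [Ring R]
    [IsNoetherianRing R] (χ : R →+* R) (hχ : Function.Surjective χ) : Function.Injective χ := by
  have hmono : Monotone fun n : ℕ ↦ RingHom.ker (χ ^ n) := fun m n hmn x hx ↦ by
    rw [RingHom.mem_ker, ← Nat.sub_add_cancel hmn, pow_add, RingHom.coe_mul, Function.comp_apply,
      (RingHom.mem_ker).mp hx, map_zero]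
  obtain ⟨n, hn⟩ := monotone_stabilizes_iff_noetherian.mpr ‹_› ⟨_, hmono⟩
  rw [injective_iff_map_eq_zero]
  intro x hx
  obtain ⟨y, rfl⟩ := (RingHom.coe_pow χ n ▸ hχ.iterate n) x
  have hy : y ∈ RingHom.ker (χ ^ (n + 1)) := by
    rwa [RingHom.mem_ker, pow_succ', RingHom.coe_mul, Function.comp_apply]
  exact (hn (n + 1) n.le_succ).ge hy

section Retraction

variable {k : Type*} [CommSemiring k] {R R' : Type*} [CommSemiring R] [Algebra k R]
  [CommSemiring R'] [Algebra k R'] {A B : Type*} [Semiring A] [Algebra k A] [Semiring B]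
  [Algebra k B]

variable (A) in
noncomputable def tensorRetraction (f : R →ₐ[k] k) : A ⊗[k] R →ₐ[k] A :=
  (Algebra.TensorProduct.rid k k A).toAlgHom.comp (map (AlgHom.id k A) f)

@[simp]
lemma tensorRetraction_tmul (f : R →ₐ[k] k) (a : A) (r : R) :
    tensorRetraction A f (a ⊗ₜ r) = f r • a := by
  simp [tensorRetraction]

lemma tensorRetraction_comp_algEquiv (φ : A ⊗[k] R ≃ₐ[k] B ⊗[k] R') (ψ : R →ₐ[k] R')
    (hφ : ∀ r, φ (1 ⊗ₜ r) = 1 ⊗ₜ ψ r) (f : R →ₐ[k] k) (g : R' →ₐ[k] k) (hfg : g.comp ψ = f) :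
    (tensorRetraction B g).comp φ.toAlgHom =
      ((tensorRetraction B g).comp (φ.toAlgHom.comp includeLeft)).comp (tensorRetraction A f) := by
  refine Algebra.TensorProduct.ext' fun a r ↦ ?_
  have hsplit : a ⊗ₜ[k] r = (a ⊗ₜ[k] (1 : R)) * (1 ⊗ₜ r) := by
    rw [tmul_mul_tmul, mul_one, one_mul]
  rw [hsplit]
  simp only [AlgHom.comp_apply, map_mul]
  simp [hφ, ← hfg, ← Algebra.TensorProduct.one_def]

lemma nonempty_algEquiv_of_map_one_tmul (φ : A ⊗[k] R ≃ₐ[k] B ⊗[k] R') (ψ : R ≃ₐ[k] R')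
    (hφ : ∀ r, φ (1 ⊗ₜ r) = 1 ⊗ₜ ψ r) (f : R →ₐ[k] k) : Nonempty (A ≃ₐ[k] B) := by
  set g := f.comp ψ.symm.toAlgHom
  have hφ' : ∀ s, φ.symm (1 ⊗ₜ s) = 1 ⊗ₜ ψ.symm s := fun s ↦ by
    rw [φ.symm_apply_eq, hφ, ψ.apply_symm_apply]
  have hB := tensorRetraction_comp_algEquiv φ ψ hφ f g (by ext; simp [g])
  have hA := tensorRetraction_comp_algEquiv φ.symm ψ.symm hφ' g f (by ext; simp [g])
  refine ⟨AlgEquiv.ofAlgHom ((tensorRetraction B g).comp (φ.toAlgHom.comp includeLeft))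
    ((tensorRetraction A f).comp (φ.symm.toAlgHom.comp includeLeft)) ?_ ?_⟩
  · ext b
    simpa using (DFunLike.congr_fun hB (φ.symm (b ⊗ₜ 1))).symm
  · ext a
    simpa using (DFunLike.congr_fun hA (φ (a ⊗ₜ 1))).symm

end Retraction

section Center

variable {k : Type*} [CommSemiring k] {X Y : Type*} [Ring X] [Algebra k X] [Ring Y] [Algebra k Y]

noncomputable def AlgEquiv.centerCongr (φ : X ≃ₐ[k] Y) :
    Subalgebra.center k X ≃ₐ[k] Subalgebra.center k Y :=
  { Subring.centerCongr φ.toRingEquiv with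
    commutes' r := Subtype.ext (φ.commutes r) }

@[simp]
lemma AlgEquiv.coe_centerCongr_apply (φ : X ≃ₐ[k] Y) (x : Subalgebra.center k X) :
    (φ.centerCongr x : Y) = φ x := rfl

end Center

section CenterTensor

variable (k : Type*) [CommSemiring k] (A : Type*) [Semiring A] [Algebra k A]
  (R : Type*) [CommSemiring R] [Algebra k R]

lemma Subalgebra.center_tensorProduct [Module.Free k R] :
    Subalgebra.center k (A ⊗[k] R) =
      (Algebra.TensorProduct.map (Subalgebra.center k A).val (AlgHom.id k R)).range := by
  refine le_antisymm ((Subalgebra.center_le_centralizer k _).trans_eq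
    (Subalgebra.centralizer_coe_range_includeLeft_eq_center_tensorProduct k A R)) ?_
  rw [map_range, AlgHom.range_comp, AlgHom.range_comp, Subalgebra.range_val, Algebra.range_id]
  exact sup_le (includeLeft_map_center_le k A R)
    ((Subalgebra.map_mono (Subalgebra.center_eq_top k R).ge).trans
      (includeRight_map_center_le k A R))

end CenterTensor

lemma Algebra.TensorProduct.map_id_injective {k A B R : Type*} [CommSemiring k] [Semiring A]
    [Algebra k A] [Semiring B] [Algebra k B] [Semiring R] [Algebra k R] [Module.Flat k R]
    {f : A →ₐ[k] B} (hf : Function.Injective f) : Function.Injective (map f (AlgHom.id k R)) := by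
  have hlin : (map f (AlgHom.id k R) : A ⊗[k] R → B ⊗[k] R) = LinearMap.rTensor R f.toLinearMap :=
    congrArg DFunLike.coe (TensorProduct.ext' fun _ _ ↦ rfl)
  rw [hlin]
  exact Module.Flat.rTensor_preserves_injective_linearMap _ hf

section CenterTensorField

variable {k : Type*} [Field k] {A B : Type*} [Ring A] [Algebra k A] [Ring B] [Algebra k B]
  {R : Type*} [CommRing R] [Algebra k R]

variable (A R) in
noncomputable def centerTensorEquiv :
    Subalgebra.center k A ⊗[k] R ≃ₐ[k] Subalgebra.center k (A ⊗[k] R) :=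
  (AlgEquiv.ofInjective _ (map_id_injective Subtype.val_injective)).trans
    (Subalgebra.equivOfEq _ _ (Subalgebra.center_tensorProduct k A R).symm)

@[simp]
lemma coe_centerTensorEquiv_tmul (c : Subalgebra.center k A) (r : R) :
    (centerTensorEquiv A R (c ⊗ₜ r) : A ⊗[k] R) = (c : A) ⊗ₜ r := rfl

variable (R) in
noncomputable def centerTensorEquivOfCenterEqBot [Nontrivial A]
    (hA : Subalgebra.center k A = ⊥) : R ≃ₐ[k] Subalgebra.center k (A ⊗[k] R) :=
  (Algebra.TensorProduct.lid k R).symm.trans <|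
    (Algebra.TensorProduct.congr ((Algebra.botEquiv k A).symm.trans
      (Subalgebra.equivOfEq _ _ hA.symm)) AlgEquiv.refl).trans (centerTensorEquiv A R)

@[simp]
lemma coe_centerTensorEquivOfCenterEqBot_apply [Nontrivial A] (hA : Subalgebra.center k A = ⊥)
    (r : R) : (centerTensorEquivOfCenterEqBot R hA r : A ⊗[k] R) = 1 ⊗ₜ r := by
  simp [centerTensorEquivOfCenterEqBot]

end CenterTensorField

section Main

variable {k : Type*} [Field k] {A B : Type*} [Ring A] [Algebra k A] [Ring B] [Algebra k B]
  {R : Type*} [CommRing R] [Algebra k R]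

lemma algebraMap_surjective_of_tensorProduct_algEquiv [IsNoetherianRing R] (f : R →ₐ[k] k)
    (ρ : A ⊗[k] R ≃ₐ[k] R) : Function.Surjective (algebraMap k A) := by
  set g : A →ₐ[k] k := f.comp ((ρ : A ⊗[k] R →ₐ[k] R).comp includeLeft)
  set q : A ⊗[k] R →ₐ[k] R :=
    (Algebra.TensorProduct.lid k R : k ⊗[k] R →ₐ[k] R).comp (map g (AlgHom.id k R))
  have hq : Function.Injective q := by
    have hχ := RingHom.injective_of_surjective_of_isNoetherianRing
      (q.comp (ρ.symm : R →ₐ[k] A ⊗[k] R)).toRingHom fun r ↦ ⟨ρ (1 ⊗ₜ r), by simp [q]⟩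
    simpa using hχ.comp ρ.injective
  have : Nontrivial R := f.toRingHom.domain_nontrivial
  intro a
  refine ⟨g a, includeLeft_injective (S := k) (FaithfulSMul.algebraMap_injective k R) (hq ?_)⟩
  simp [q, Algebra.smul_def]

lemma center_eq_bot_of_tensorProduct_algEquiv [IsNoetherianRing R] (f : R →ₐ[k] k)
    [Nontrivial A] (hA : Subalgebra.center k A = ⊥) (φ : A ⊗[k] R ≃ₐ[k] B ⊗[k] R) :
    Subalgebra.center k B = ⊥ := by
  have hsurj := algebraMap_surjective_of_tensorProduct_algEquiv f <|
    (centerTensorEquiv B R).trans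
      (φ.centerCongr.symm.trans (centerTensorEquivOfCenterEqBot R hA).symm)
  refine eq_bot_iff.mpr fun x hx ↦ ?_
  obtain ⟨a, ha⟩ := hsurj ⟨x, hx⟩
  exact Algebra.mem_bot.mpr ⟨a, congrArg Subtype.val ha⟩

lemma subsingleton_of_tensorProduct_algEquiv [Subsingleton A] (f : R →ₐ[k] k)
    (φ : A ⊗[k] R ≃ₐ[k] B ⊗[k] R) : Subsingleton B := by
  have : Subsingleton (B ⊗[k] R) := φ.symm.toEquiv.subsingleton
  refine Function.LeftInverse.injective (g := tensorRetraction B f)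
    (f := includeLeft (S := k) (B := R)) (fun b ↦ ?_) |>.subsingleton
  simp

lemma nonempty_algEquiv_of_tensorProduct_algEquiv [IsNoetherianRing R] (f : R →ₐ[k] k)
    (hA : Subalgebra.center k A = ⊥) (φ : A ⊗[k] R ≃ₐ[k] B ⊗[k] R) : Nonempty (A ≃ₐ[k] B) := by
  rcases subsingleton_or_nontrivial A with _ | _
  · have := subsingleton_of_tensorProduct_algEquiv f φ
    exact ⟨default⟩
  have : Nontrivial B := not_subsingleton_iff_nontrivial.mp fun _ ↦
    not_subsingleton A (subsingleton_of_tensorProduct_algEquiv f φ.symm)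
  have hB := center_eq_bot_of_tensorProduct_algEquiv f hA φ
  set eA := centerTensorEquivOfCenterEqBot R hA
  set eB := centerTensorEquivOfCenterEqBot R hB
  refine nonempty_algEquiv_of_map_one_tmul φ (eA.trans (φ.centerCongr.trans eB.symm))
    (fun r ↦ ?_) f
  have h := congrArg Subtype.val (eB.apply_symm_apply (φ.centerCongr (eA r)))
  rw [coe_centerTensorEquivOfCenterEqBot_apply, AlgEquiv.coe_centerCongr_apply,
    coe_centerTensorEquivOfCenterEqBot_apply] at h
  exact h.symm

end Main

lemma isUniversallyCancellative_of_center_eq_bot {k A : Type u} [Field k] [Ring A] [Algebra k A]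
    (h : Subalgebra.center k A = ⊥) : IsUniversallyCancellative k A := by
  intro R _ _ _ _ ⟨f, _⟩ B _ _ ⟨φ⟩
  have := Algebra.FiniteType.isNoetherianRing k R
  exact nonempty_algEquiv_of_tensorProduct_algEquiv f h φ

open Polynomial in
lemma IsUniversallyCancellative.isCancellative {k A : Type u} [Field k] [Ring A] [Algebra k A]
    (hA : IsUniversallyCancellative k A) : IsCancellative k A := fun B _ _ ⟨e⟩ ↦
  hA k[X] inferInstance ⟨aeval 0, fun a ↦ ⟨C a, by simp⟩⟩ B
    ⟨(polyEquivTensor k A).symm.trans (e.trans (polyEquivTensor k B))⟩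

/-- If the center of `A` is exactly `k`, then `A` is universally cancellative;
in particular `A` is cancellative. -/
theorem universallyCancellative_of_center_eq_bot
    (k A : Type u) [Field k] [Ring A] [Algebra k A]
    (h : Subalgebra.center k A = ⊥) :
    IsUniversallyCancellative k A ∧ IsCancellative k A :=
  have hA := isUniversallyCancellative_of_center_eq_bot h
  ⟨hA, hA.isCancellative⟩
end

section
/- Let k be a field and q ∈ k× not a root of unity, with n ≥ 2. Then the center of the skew polynomial ring k_q[x_1,...,x_n] (generated by x_1,...,x_n with relations x_j x_i = q x_i x_j for i < j) is k. -/
universe u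

/-- The defining relations of the skew polynomial ring `k_q[x₁,…,xₙ]`:
`x_j x_i = q x_i x_j` for all `i < j`. -/
inductive SkewRel (k : Type u) [Field k] (q : k) (n : ℕ) :
    FreeAlgebra k (Fin n) → FreeAlgebra k (Fin n) → Prop
  | rel (i j : Fin n) (hij : i < j) :
      SkewRel k q n (FreeAlgebra.ι k j * FreeAlgebra.ι k i)
        (algebraMap k (FreeAlgebra k (Fin n)) q * (FreeAlgebra.ι k i * FreeAlgebra.ι k j))

/-- The skew polynomial ring `k_q[x₁,…,xₙ]`. -/
def SkewPolynomialRing (k : Type u) [Field k] (q : k) (n : ℕ) : Type u :=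
  RingQuot (SkewRel k q n)

noncomputable instance (k : Type u) [Field k] (q : k) (n : ℕ) :
    Ring (SkewPolynomialRing k q n) := inferInstanceAs (Ring (RingQuot (SkewRel k q n)))

noncomputable instance (k : Type u) [Field k] (q : k) (n : ℕ) :
    Algebra k (SkewPolynomialRing k q n) :=
  inferInstanceAs (Algebra k (RingQuot (SkewRel k q n)))

/-!
The algebra acts on the vector space with basis `e_a`, `a ∈ ℕⁿ`, by
`x_j • e_a = q ^ (a_1 + ⋯ + a_{j-1}) • e_{a + δ_j}`. The ordered monomials `x^a` span the
algebra and `x^a • e_0 = e_a`, so they form a basis and `z ↦ z • e_0` reads off the coordinates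
of `z`. If `z` is central and `x^a` occurs in `z`, comparing the coefficients of `x^{a + δ_j}` in
`x_j z = z x_j` gives `q ^ (∑_{i<j} a_i) = q ^ (∑_{i>j} a_i)`. For `j` the first and the last
index one side is `q ^ 0`, and as `q` is not a root of unity this forces `a = 0`.
-/

namespace Finsupp

variable {R M : Type*} [CommSemiring R] [AddCommMonoid M]

noncomputable def weightedShift (f : M → R) (d : M) : (M →₀ R) →ₗ[R] (M →₀ R) :=
  lsum R fun a => f a • lsingle (a + d)

@[simp]
theorem weightedShift_single (f : M → R) (d a : M) (c : R) :
    weightedShift f d (single a c) = single (a + d) (f a * c) := by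
  simp [weightedShift, smul_single]

theorem weightedShift_apply_add [IsRightCancelAdd M] (f : M → R) (d : M) (v : M →₀ R) (a : M) :
    weightedShift f d v (a + d) = f a * v a := by
  classical
  induction v using Finsupp.induction_linear with
  | zero => simp
  | add v w hv hw => simp [hv, hw, mul_add]
  | single b c => by_cases h : b = a <;> simp [h]

end Finsupp

namespace SkewPolynomialRing

open Finsupp

variable {k : Type u} [Field k] {q : k} {n : ℕ}

variable (k q) in
noncomputable def X (i : Fin n) : SkewPolynomialRing k q n :=
  RingQuot.mkAlgHom k (SkewRel k q n) (FreeAlgebra.ι k i)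

variable (k q) in
noncomputable def monomial (a : Fin n →₀ ℕ) : SkewPolynomialRing k q n :=
  ((List.finRange n).map fun i => X k q i ^ a i).prod

theorem monomial_zero : monomial k q (0 : Fin n →₀ ℕ) = 1 := by
  simp [monomial]

theorem X_mul_X_of_lt {i j : Fin n} (hij : i < j) :
    X k q j * X k q i = q • (X k q i * X k q j) := by
  have h := RingQuot.mkAlgHom_rel k (SkewRel.rel (q := q) i j hij)
  rw [map_mul, map_mul, map_mul, AlgHom.commutes, ← Algebra.smul_def] at h
  exact h

theorem X_mul_X_pow_of_lt {i j : Fin n} (hij : i < j) (m : ℕ) :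
    X k q j * X k q i ^ m = q ^ m • (X k q i ^ m * X k q j) := by
  induction m with
  | zero => simp
  | succ m ih =>
    rw [pow_succ, ← mul_assoc, ih, smul_mul_assoc, mul_assoc, X_mul_X_of_lt hij, mul_smul_comm,
      smul_smul, ← mul_assoc, pow_succ]

theorem induction_on {P : SkewPolynomialRing k q n → Prop} (r : SkewPolynomialRing k q n)
    (algebraMap : ∀ c, P (algebraMap k _ c)) (X : ∀ i, P (X k q i))
    (add : ∀ r s, P r → P s → P (r + s)) (mul : ∀ r s, P r → P s → P (r * s)) : P r := by
  obtain ⟨x, rfl⟩ := RingQuot.mkAlgHom_surjective k (SkewRel k q n) r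
  induction x using FreeAlgebra.induction with
  | grade0 c => rw [AlgHom.commutes]; exact algebraMap c
  | grade1 i => exact X i
  | add x y hx hy => rw [map_add]; exact add _ _ hx hy
  | mul x y hx hy => rw [map_mul]; exact mul _ _ hx hy

theorem X_mul_prod_map_X_pow (a : Fin n →₀ ℕ) {l : List (Fin n)} (hl : l.Pairwise (· < ·))
    {j : Fin n} (hj : j ∈ l) :
    ∃ c : k, X k q j * (l.map fun i => X k q i ^ a i).prod =
      c • (l.map fun i => X k q i ^ (a + single j 1 : Fin n →₀ ℕ) i).prod := by
  induction l with
  | nil => simp at hj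
  | cons i t ih =>
    obtain ⟨hit, ht⟩ := List.pairwise_cons.mp hl
    simp only [List.map_cons, List.prod_cons]
    rcases List.mem_cons.mp hj with rfl | hjt
    · have htail : (t.map fun i => X k q i ^ (a + single j 1 : Fin n →₀ ℕ) i) =
          t.map fun i => X k q i ^ a i :=
        List.map_congr_left fun x hx => by simp [(hit x hx).ne']
      refine ⟨1, ?_⟩
      rw [htail, one_smul, ← mul_assoc, ← pow_succ', Finsupp.add_apply, single_eq_same]
    · obtain ⟨c, hc⟩ := ih ht hjt
      have hij : i < j := hit j hjt
      refine ⟨q ^ a i * c, ?_⟩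
      rw [← mul_assoc, X_mul_X_pow_of_lt hij, smul_mul_assoc, mul_assoc, hc, mul_smul_comm,
        smul_smul, Finsupp.add_apply, single_eq_of_ne hij.ne, add_zero]

theorem X_mul_monomial (j : Fin n) (a : Fin n →₀ ℕ) :
    ∃ c : k, X k q j * monomial k q a = c • monomial k q (a + single j 1) :=
  X_mul_prod_map_X_pow a (List.pairwise_lt_finRange n) (List.mem_finRange j)

theorem span_range_monomial : Submodule.span k (Set.range (monomial k q (n := n))) = ⊤ := by
  set p := Submodule.span k (Set.range (monomial k q (n := n)))
  have hX : ∀ j, ∀ s ∈ p, X k q j * s ∈ p := by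
    intro j s hs
    induction hs using Submodule.span_induction with
    | mem s hs =>
      obtain ⟨a, rfl⟩ := hs
      obtain ⟨c, hc⟩ := X_mul_monomial (q := q) j a
      exact hc ▸ p.smul_mem c (Submodule.subset_span ⟨_, rfl⟩)
    | zero => simp
    | add s t _ _ hs ht => simpa [mul_add] using p.add_mem hs ht
    | smul c s _ hs => simpa using p.smul_mem c hs
  have hmul : ∀ r, ∀ s ∈ p, r * s ∈ p := fun r => by
    induction r using induction_on with
    | algebraMap c => simpa [Algebra.algebraMap_eq_smul_one] using fun s hs => p.smul_mem c hs
    | X j => exact hX j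
    | add r s hr hs => exact fun t ht => by simpa [add_mul] using p.add_mem (hr t ht) (hs t ht)
    | mul r s hr hs => exact fun t ht => by simpa [mul_assoc] using hr _ (hs t ht)
  refine eq_top_iff.mpr fun r _ => ?_
  simpa using hmul r 1 (monomial_zero (k := k) (q := q) ▸ Submodule.subset_span ⟨0, rfl⟩)

def degBelow (j : Fin n) (a : Fin n →₀ ℕ) : ℕ := ∑ i ∈ Finset.Iio j, a i

def degAbove (j : Fin n) (a : Fin n →₀ ℕ) : ℕ := ∑ i ∈ Finset.Ioi j, a i

theorem degBelow_add (j : Fin n) (a b : Fin n →₀ ℕ) :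
    degBelow j (a + b) = degBelow j a + degBelow j b := by
  simp [degBelow, Finset.sum_add_distrib]

theorem degBelow_single (j i : Fin n) (m : ℕ) :
    degBelow j (single i m) = if i < j then m else 0 := by
  classical
  simp [degBelow, single_apply, Finset.sum_ite_eq]

theorem sum_mul_degBelow_single (a : Fin n →₀ ℕ) (j : Fin n) :
    ∑ i, a i * degBelow i (single j 1) = degAbove j a := by
  simp [degBelow_single, degAbove, ← Finset.sum_filter, Finset.filter_lt_eq_Ioi]

variable (k q) in
noncomputable def xOp (j : Fin n) : Module.End k ((Fin n →₀ ℕ) →₀ k) :=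
  weightedShift (fun a => q ^ degBelow j a) (single j 1)

theorem xOp_mul_xOp_of_lt {i j : Fin n} (hij : i < j) :
    xOp k q j * xOp k q i = algebraMap k _ q * (xOp k q i * xOp k q j) := by
  refine lhom_ext fun a c => ?_
  simp only [xOp, Module.End.mul_apply, weightedShift_single, Module.algebraMap_end_apply,
    smul_single, degBelow_add, degBelow_single, if_pos hij, if_neg (lt_asymm hij),
    add_zero, smul_eq_mul]
  rw [add_right_comm]
  congr 1
  ring

variable (k q) in
noncomputable def toEnd : SkewPolynomialRing k q n →ₐ[k] Module.End k ((Fin n →₀ ℕ) →₀ k) :=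
  RingQuot.liftAlgHom k ⟨FreeAlgebra.lift k (xOp k q), by
    rintro _ _ ⟨i, j, hij⟩
    simpa using xOp_mul_xOp_of_lt hij⟩

@[simp]
theorem toEnd_X (i : Fin n) : toEnd k q (X k q i) = xOp k q i :=
  (RingQuot.liftAlgHom_mkAlgHom_apply k _ _ _).trans (FreeAlgebra.lift_ι_apply _ _)

theorem xOp_pow_single (i : Fin n) (m : ℕ) (b : Fin n →₀ ℕ) (c : k) :
    (xOp k q i ^ m) (single b c) = single (b + single i m) (q ^ (m * degBelow i b) * c) := by
  induction m with
  | zero => simp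
  | succ m ih =>
    rw [pow_succ', Module.End.mul_apply, ih, xOp, weightedShift_single, degBelow_add,
      degBelow_single, if_neg (lt_irrefl i), add_zero, add_assoc, ← single_add, ← mul_assoc,
      ← pow_add]
    ring_nf

theorem prod_map_xOp_pow_single (a : Fin n →₀ ℕ) {l : List (Fin n)} (hl : l.Pairwise (· < ·))
    (b : Fin n →₀ ℕ) (c : k) :
    (l.map fun i => xOp k q i ^ a i).prod (single b c) =
      single (b + (l.map fun i => single i (a i)).sum)
        (q ^ (l.map fun i => a i * degBelow i b).sum * c) := by
  induction l with
  | nil => simp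
  | cons i t ih =>
    obtain ⟨hit, ht⟩ := List.pairwise_cons.mp hl
    have htail : degBelow i (t.map fun x => single x (a x)).sum = 0 := by
      refine Finset.sum_eq_zero fun m hm => ?_
      rw [← applyAddHom_apply, map_list_sum, List.map_map]
      exact List.sum_eq_zero fun x hx => by
        obtain ⟨y, hy, rfl⟩ := List.mem_map.mp hx
        exact single_eq_of_ne ((Finset.mem_Iio.mp hm).trans (hit y hy)).ne
    simp only [List.map_cons, List.prod_cons, List.sum_cons, Module.End.mul_apply, ih ht,
      xOp_pow_single, degBelow_add, htail, add_zero, pow_add]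
    congr 1
    · abel
    · ring

theorem toEnd_monomial_single (a b : Fin n →₀ ℕ) (c : k) :
    toEnd k q (monomial k q a) (single b c) =
      single (b + a) (q ^ (∑ i, a i * degBelow i b) * c) := by
  have h : toEnd k q (monomial k q a) = ((List.finRange n).map fun i => xOp k q i ^ a i).prod := by
    simp [monomial, map_list_prod, Function.comp_def]
  rw [h, prod_map_xOp_pow_single a (List.pairwise_lt_finRange n), ← Fin.sum_univ_def,
    ← Fin.sum_univ_def, univ_sum_single]

variable (k q) in
noncomputable def coeffs : SkewPolynomialRing k q n →ₗ[k] (Fin n →₀ ℕ) →₀ k :=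
  LinearMap.applyₗ (single 0 1) ∘ₗ (toEnd k q).toLinearMap

theorem coeffs_apply (z : SkewPolynomialRing k q n) : coeffs k q z = toEnd k q z (single 0 1) :=
  rfl

theorem coeffs_monomial (a : Fin n →₀ ℕ) : coeffs k q (monomial k q a) = single a 1 := by
  simp [coeffs_apply, toEnd_monomial_single, degBelow]

theorem linearCombination_coeffs (z : SkewPolynomialRing k q n) :
    linearCombination k (monomial k q) (coeffs k q z) = z := by
  have hsurj : LinearMap.range (linearCombination k (monomial k q (n := n))) = ⊤ := by
    rw [range_linearCombination, span_range_monomial]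
  obtain ⟨w, rfl⟩ := LinearMap.range_eq_top.mp hsurj z
  have hinv : coeffs k q ∘ₗ linearCombination k (monomial k q (n := n)) = LinearMap.id :=
    lhom_ext fun a c => by simp [coeffs_monomial]
  rw [← LinearMap.comp_apply (coeffs k q), hinv, LinearMap.id_apply]

theorem coeffs_X_mul (j : Fin n) (z : SkewPolynomialRing k q n) :
    coeffs k q (X k q j * z) = xOp k q j (coeffs k q z) := by
  simp [coeffs_apply]

theorem coeffs_mul_X (j : Fin n) (z : SkewPolynomialRing k q n) :
    coeffs k q (z * X k q j) =
      weightedShift (fun a => q ^ degAbove j a) (single j 1) (coeffs k q z) := by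
  have key : LinearMap.applyₗ (single (single j 1) 1) ∘ₗ (toEnd k q).toLinearMap ∘ₗ
      linearCombination k (monomial k q) = weightedShift (fun a => q ^ degAbove j a) (single j 1) :=
    lhom_ext fun a c => by
      simp only [LinearMap.comp_apply, linearCombination_single, AlgHom.toLinearMap_apply,
        map_smul, LinearMap.applyₗ_apply_apply, toEnd_monomial_single,
        sum_mul_degBelow_single, smul_single, smul_eq_mul, mul_one, weightedShift_single,
        add_comm (single j 1), mul_comm c]
  calc coeffs k q (z * X k q j)
      = toEnd k q z (single (single j 1) 1) := by simp [coeffs_apply, xOp, degBelow]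
    _ = _ := by rw [← key]; simp [linearCombination_coeffs]

theorem pow_degBelow_eq_pow_degAbove_of_mem_center {z : SkewPolynomialRing k q n}
    (hz : z ∈ Subalgebra.center k _) {a : Fin n →₀ ℕ} (ha : a ∈ (coeffs k q z).support)
    (j : Fin n) : q ^ degBelow j a = q ^ degAbove j a := by
  have h := congrArg (fun w => w (a + single j 1))
    (congrArg (coeffs k q) (Subalgebra.mem_center_iff.mp hz (X k q j)))
  simp only [coeffs_X_mul, coeffs_mul_X, xOp, weightedShift_apply_add] at h
  exact mul_right_cancel₀ (mem_support_iff.mp ha) h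

theorem eq_zero_of_forall_pow_degBelow_eq_pow_degAbove (hq : ∀ m : ℕ, 1 ≤ m → q ^ m ≠ 1)
    (hn : 2 ≤ n) {a : Fin n →₀ ℕ} (h : ∀ j, q ^ degBelow j a = q ^ degAbove j a) : a = 0 := by
  have eq_zero_of_pow_eq_one {m : ℕ} (hm : q ^ m = 1) : m = 0 :=
    Nat.eq_zero_of_not_pos fun hpos => hq m hpos hm
  let first : Fin n := ⟨0, by omega⟩
  let last : Fin n := ⟨n - 1, by omega⟩
  have habove : degAbove first a = 0 := eq_zero_of_pow_eq_one <| by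
    rw [← h first, degBelow, Finset.sum_eq_zero fun i hi => absurd (Finset.mem_Iio.mp hi)
      (by simp [first, Fin.lt_def]), pow_zero]
  have hbelow : degBelow last a = 0 := eq_zero_of_pow_eq_one <| by
    rw [h last, degAbove, Finset.sum_eq_zero fun i hi => absurd (Finset.mem_Ioi.mp hi)
      (by simp [last, Fin.lt_def]; omega), pow_zero]
  ext i
  by_cases hi : first < i
  · exact Finset.sum_eq_zero_iff.mp habove i (Finset.mem_Ioi.mpr hi)
  · refine Finset.sum_eq_zero_iff.mp hbelow i (Finset.mem_Iio.mpr ?_)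
    simp only [first, last, Fin.lt_def] at hi ⊢
    omega

end SkewPolynomialRing

theorem center_skewPolynomialRing_eq_bot_general (k : Type u) [Field k] (q : k) (n : ℕ)
    (hq : ∀ m : ℕ, 1 ≤ m → q ^ m ≠ 1) (hn : 2 ≤ n) :
    Subalgebra.center k (SkewPolynomialRing k q n) = ⊥ := by
  refine eq_bot_iff.mpr fun z hz => Algebra.mem_bot.mpr ?_
  have hsupp : (SkewPolynomialRing.coeffs k q z).support ⊆ {0} := fun a ha =>
    Finset.mem_singleton.mpr <|
      SkewPolynomialRing.eq_zero_of_forall_pow_degBelow_eq_pow_degAbove hq hn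
        (SkewPolynomialRing.pow_degBelow_eq_pow_degAbove_of_mem_center hz ha)
  obtain ⟨c, hc⟩ := Finsupp.support_subset_singleton'.mp hsupp
  refine ⟨c, ?_⟩
  rw [← SkewPolynomialRing.linearCombination_coeffs z, hc, Finsupp.linearCombination_single,
    SkewPolynomialRing.monomial_zero, Algebra.algebraMap_eq_smul_one]

/-- If `q ∈ k×` is not a root of unity and `n ≥ 2`, then the center of the skew
polynomial ring `k_q[x₁,…,xₙ]` is `k`. -/
theorem center_skewPolynomialRing_eq_bot (k : Type u) [Field k] (q : k) (n : ℕ)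
    (hq0 : q ≠ 0) (hq : ∀ m : ℕ, 1 ≤ m → q ^ m ≠ 1) (hn : 2 ≤ n) :
    Subalgebra.center k (SkewPolynomialRing k q n) = ⊥ :=
  center_skewPolynomialRing_eq_bot_general k q n hq hn
end

section
/- Let k be a field of characteristic zero. Then the center of the first Weyl algebra A_1(k) = k⟨x,y⟩/(yx − xy − 1) is k. -/
universe u

/-- The defining relation of the first Weyl algebra: `yx - xy = 1`,
i.e. `y * x = x * y + 1`, where `x` is the generator indexed by `0` and
`y` the generator indexed by `1`. -/
inductive WeylRel (k : Type u) [Field k] :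
    FreeAlgebra k (Fin 2) → FreeAlgebra k (Fin 2) → Prop
  | rel : WeylRel k (FreeAlgebra.ι k 1 * FreeAlgebra.ι k 0)
      (FreeAlgebra.ι k 0 * FreeAlgebra.ι k 1 + 1)

/-- The first Weyl algebra `A₁(k) = k⟨x,y⟩/(yx - xy - 1)`. -/
def WeylAlgebra1 (k : Type u) [Field k] : Type u := RingQuot (WeylRel k)

noncomputable instance (k : Type u) [Field k] : Ring (WeylAlgebra1 k) :=
  inferInstanceAs (Ring (RingQuot (WeylRel k)))

noncomputable instance (k : Type u) [Field k] : Algebra k (WeylAlgebra1 k) :=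
  inferInstanceAs (Algebra k (RingQuot (WeylRel k)))

/-! The representation `x ↦ X·`, `y ↦ d/dX` of `A₁(k)` on `k[X]` is faithful: the ordered
monomials `xⁱ yʲ` span `A₁(k)`, and in characteristic zero their images `Xⁱ·(d/dX)ʲ` are
linearly independent, as one sees by applying them to `Xⁿ`. A central element therefore acts by an
endomorphism commuting with `X·` and `d/dX`. Commuting with `X·` makes it multiplication by the
polynomial `p` it sends `1` to, and commuting with `d/dX` forces `p' = 0`, so `p` is a constant. -/

theorem mul_pow_succ_eq_of_mul_eq_mul_add_one {R : Type*} [Semiring R] {X Y : R}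
    (h : Y * X = X * Y + 1) (n : ℕ) :
    Y * X ^ (n + 1) = X ^ (n + 1) * Y + (n + 1) • X ^ n := by
  induction n with
  | zero => simpa using h
  | succ n ih =>
    calc Y * X ^ (n + 2) = (Y * X ^ (n + 1)) * X := by rw [mul_assoc, ← pow_succ]
      _ = X ^ (n + 1) * (Y * X) + (n + 1) • X ^ (n + 1) := by
        rw [ih, add_mul, mul_assoc, smul_mul_assoc, ← pow_succ]
      _ = X ^ (n + 2) * Y + (n + 2) • X ^ (n + 1) := by
        rw [h, mul_add, mul_one, ← mul_assoc, ← pow_succ, add_assoc, succ_nsmul' _ (n + 1),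
          add_comm (X ^ (n + 1))]

theorem Submodule.eq_top_of_one_mem_of_mul_mem {R A : Type*} [CommSemiring R] [Semiring A]
    [Algebra R A] {s : Set A} (hs : Algebra.adjoin R s = ⊤) {S : Submodule R A}
    (one_mem : 1 ∈ S) (mul_mem : ∀ a ∈ s, ∀ x ∈ S, a * x ∈ S) : S = ⊤ := by
  refine eq_top_iff'.2 fun w => ?_
  suffices ∀ x ∈ S, w * x ∈ S by simpa using this 1 one_mem
  induction (hs ▸ Algebra.mem_top : w ∈ Algebra.adjoin R s) using Algebra.adjoin_induction with
  | mem a ha => exact mul_mem a ha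
  | algebraMap r => exact fun x hx => by simpa [Algebra.smul_def] using S.smul_mem r hx
  | add a b _ _ ha hb => exact fun x hx => by rw [add_mul]; exact S.add_mem (ha x hx) (hb x hx)
  | mul a b _ _ ha hb => exact fun x hx => by rw [mul_assoc]; exact ha _ (hb x hx)

theorem LinearMap.injective_of_linearIndependent_comp {R M N ι : Type*} [Semiring R]
    [AddCommMonoid M] [Module R M] [AddCommMonoid N] [Module R N] (f : M →ₗ[R] N) {v : ι → M}
    (hv : Submodule.span R (Set.range v) = ⊤) (hf : LinearIndependent R (f ∘ v)) :
    Function.Injective f := by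
  have hsurj : Function.Surjective (Finsupp.linearCombination R v) := by
    rw [← LinearMap.range_eq_top, Finsupp.range_linearCombination, hv]
  intro a b hab
  obtain ⟨c, rfl⟩ := hsurj a
  obtain ⟨d, rfl⟩ := hsurj b
  rw [Finsupp.apply_linearCombination, Finsupp.apply_linearCombination] at hab
  rw [hf.finsuppLinearCombination_injective hab]

section OrderedMonomial

variable {R A : Type*} [CommSemiring R] [Semiring A] [Algebra R A]

def orderedMonomial (X Y : A) (p : ℕ × ℕ) : A := X ^ p.1 * Y ^ p.2

theorem AlgHom.map_orderedMonomial {B : Type*} [Semiring B] [Algebra R B] (f : A →ₐ[R] B)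
    (X Y : A) (p : ℕ × ℕ) : f (orderedMonomial X Y p) = orderedMonomial (f X) (f Y) p := by
  simp [orderedMonomial]

theorem orderedMonomial_mem_span (X Y : A) (i j : ℕ) :
    X ^ i * Y ^ j ∈ Submodule.span R (Set.range (orderedMonomial X Y)) :=
  Submodule.subset_span ⟨(i, j), rfl⟩

theorem mul_mem_span_orderedMonomial {X Y : A} (h : Y * X = X * Y + 1) {a : A}
    (ha : a = X ∨ a = Y) {w : A} (hw : w ∈ Submodule.span R (Set.range (orderedMonomial X Y))) :
    a * w ∈ Submodule.span R (Set.range (orderedMonomial X Y)) := by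
  induction hw using Submodule.span_induction with
  | mem x hx =>
    obtain ⟨⟨i, j⟩, rfl⟩ := hx
    rcases ha with rfl | rfl
    · rw [orderedMonomial, ← mul_assoc, ← pow_succ']
      exact orderedMonomial_mem_span _ _ _ _
    · cases i with
      | zero => simpa [orderedMonomial, ← pow_succ'] using orderedMonomial_mem_span _ _ 0 (j + 1)
      | succ i =>
        rw [orderedMonomial, ← mul_assoc, mul_pow_succ_eq_of_mul_eq_mul_add_one h, add_mul,
          mul_assoc, ← pow_succ', smul_mul_assoc]
        exact add_mem (orderedMonomial_mem_span _ _ _ _)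
          (Submodule.smul_of_tower_mem _ _ (orderedMonomial_mem_span _ _ _ _))
  | zero => simp
  | add x y _ _ hx hy => rw [mul_add]; exact add_mem hx hy
  | smul r x _ hx => rw [mul_smul_comm]; exact Submodule.smul_mem _ r hx

end OrderedMonomial

namespace Polynomial

section CommSemiring

variable {R : Type*} [CommSemiring R]

theorem derivative_mul_mulLeft_X :
    derivative * LinearMap.mulLeft R (X : R[X]) = LinearMap.mulLeft R X * derivative + 1 := by
  refine LinearMap.ext fun p => ?_
  simp [derivative_mul, add_comm]

theorem orderedMonomial_mulLeft_X_derivative_apply_X_pow (p : ℕ × ℕ) (n : ℕ) :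
    orderedMonomial (LinearMap.mulLeft R (X : R[X])) derivative p (X ^ n) =
      (n.descFactorial p.2 : R) • X ^ (p.1 + (n - p.2)) := by
  simp [orderedMonomial, LinearMap.pow_mulLeft, Module.End.pow_apply,
    iterate_derivative_X_pow_eq_smul, pow_add]

theorem apply_eq_mul_apply_one_of_commute_mulLeft_X {E : Module.End R R[X]}
    (h : Commute E (LinearMap.mulLeft R X)) (f : R[X]) : E f = f * E 1 := by
  induction f using Polynomial.induction_on' with
  | add p q hp hq => rw [map_add, hp, hq, add_mul]
  | monomial n a =>
    have hXn : E (X ^ n) = X ^ n * E 1 := by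
      simpa [LinearMap.pow_mulLeft] using congr($((h.pow_right n).eq) 1)
    rw [← C_mul_X_pow_eq_monomial, ← smul_eq_C_mul, map_smul, hXn, smul_mul_assoc]

end CommSemiring

variable {R : Type*} [CommRing R] [IsAddTorsionFree R]

theorem linearIndependent_orderedMonomial_mulLeft_X_derivative :
    LinearIndependent R (orderedMonomial (LinearMap.mulLeft R (X : R[X])) derivative) := by
  rw [linearIndependent_iff]
  intro l hl
  suffices ∀ j i, l (i, j) = 0 from Finsupp.ext fun p => this p.2 p.1
  intro j
  induction j using Nat.strong_induction_on with
  | _ j ih =>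
    intro i
    -- Only the monomial `(i, j)` contributes to the coefficient of `Xⁱ` in the image of `Xʲ`:
    -- those with `j' > j` kill `Xʲ`, those with `j' < j` have zero coefficient by induction.
    have h := congr_arg (fun E : Module.End R R[X] => (E (X ^ j)).coeff i) hl
    simp only [Finsupp.linearCombination_apply, Finsupp.sum, LinearMap.sum_apply,
      LinearMap.smul_apply, LinearMap.zero_apply,
      orderedMonomial_mulLeft_X_derivative_apply_X_pow, finsetSum_coeff, coeff_smul, coeff_X_pow,
      coeff_zero, smul_eq_mul] at h
    rw [Finset.sum_eq_single (i, j)] at h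
    · simp only [Nat.descFactorial_self, Nat.sub_self, add_zero, if_true, mul_one] at h
      rw [mul_comm, ← nsmul_eq_mul] at h
      exact (nsmul_right_injective (Nat.factorial_ne_zero j)) (h.trans (nsmul_zero _).symm)
    · rintro ⟨i', j'⟩ - hne
      rcases lt_trichotomy j' j with hj | rfl | hj
      · simp [ih j' hj i']
      · have : i ≠ i' := fun h => hne (by rw [h])
        simp [this]
      · simp [Nat.descFactorial_eq_zero_iff_lt.2 hj]
    · intro hnot
      simp [Finsupp.notMem_support_iff.1 hnot]

theorem eq_algebraMap_of_commute_mulLeft_X_of_commute_derivative {E : Module.End R R[X]}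
    (hX : Commute E (LinearMap.mulLeft R X)) (hD : Commute E derivative) :
    E = algebraMap R _ ((E 1).coeff 0) := by
  have hmul := apply_eq_mul_apply_one_of_commute_mulLeft_X hX
  have hderiv : derivative (E 1) = 0 := by
    have h := congr($(hD.eq) X)
    simp only [Module.End.mul_apply, derivative_X, hmul X, derivative_mul, one_mul,
      left_eq_add] at h
    exact isRegular_X.left (h.trans (mul_zero X).symm)
  refine LinearMap.ext fun f => ?_
  rw [hmul, eq_C_of_derivative_eq_zero hderiv, Module.algebraMap_end_apply, smul_eq_C_mul,
    mul_comm, coeff_C_zero]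

end Polynomial

namespace WeylAlgebra1

open Polynomial

variable (k : Type u) [Field k]

noncomputable def mk : FreeAlgebra k (Fin 2) →ₐ[k] WeylAlgebra1 k :=
  RingQuot.mkAlgHom k (WeylRel k)

noncomputable def gen (i : Fin 2) : WeylAlgebra1 k := mk k (FreeAlgebra.ι k i)

theorem gen_one_mul_gen_zero : gen k 1 * gen k 0 = gen k 0 * gen k 1 + 1 := by
  have h : mk k (FreeAlgebra.ι k 1 * FreeAlgebra.ι k 0) =
      mk k (FreeAlgebra.ι k 0 * FreeAlgebra.ι k 1 + 1) :=
    RingQuot.mkAlgHom_rel k WeylRel.rel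
  simpa only [gen, map_mul, map_add, map_one] using h

theorem adjoin_range_gen : Algebra.adjoin k (Set.range (gen k)) = ⊤ := by
  rw [show Set.range (gen k) = mk k '' Set.range (FreeAlgebra.ι k) from Set.range_comp _ _,
    Algebra.adjoin_image, FreeAlgebra.adjoin_range_ι, Algebra.map_top, AlgHom.range_eq_top]
  exact RingQuot.mkAlgHom_surjective k (WeylRel k)

theorem span_orderedMonomial_eq_top :
    Submodule.span k (Set.range (orderedMonomial (gen k 0) (gen k 1))) = ⊤ := by
  refine Submodule.eq_top_of_one_mem_of_mul_mem (adjoin_range_gen k) ?_ ?_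
  · simpa using orderedMonomial_mem_span (R := k) (gen k 0) (gen k 1) 0 0
  · rintro _ ⟨i, rfl⟩ w hw
    exact mul_mem_span_orderedMonomial (gen_one_mul_gen_zero k) (by fin_cases i <;> simp) hw

noncomputable def polyRep : WeylAlgebra1 k →ₐ[k] Module.End k k[X] :=
  RingQuot.liftAlgHom k ⟨FreeAlgebra.lift k ![LinearMap.mulLeft k X, derivative], by
    rintro _ _ ⟨⟩
    simpa using derivative_mul_mulLeft_X⟩

theorem polyRep_mk (f : FreeAlgebra k (Fin 2)) :
    polyRep k (mk k f) = FreeAlgebra.lift k ![LinearMap.mulLeft k X, derivative] f :=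
  RingQuot.liftAlgHom_mkAlgHom_apply _ _ _ _

@[simp]
theorem polyRep_gen_zero : polyRep k (gen k 0) = LinearMap.mulLeft k X := by
  simp [gen, polyRep_mk]

@[simp]
theorem polyRep_gen_one : polyRep k (gen k 1) = derivative := by
  simp [gen, polyRep_mk]

theorem polyRep_injective [CharZero k] : Function.Injective (polyRep k) := by
  refine (polyRep k).toLinearMap.injective_of_linearIndependent_comp
    (span_orderedMonomial_eq_top k) ?_
  have hcomp : (polyRep k).toLinearMap ∘ orderedMonomial (gen k 0) (gen k 1) =
      orderedMonomial (LinearMap.mulLeft k X) derivative := by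
    ext1 p
    simp [AlgHom.map_orderedMonomial]
  rw [hcomp]
  exact linearIndependent_orderedMonomial_mulLeft_X_derivative

end WeylAlgebra1

/-- Over a field of characteristic zero, the center of the first Weyl algebra is `k`. -/
theorem center_weylAlgebra1_eq_bot (k : Type u) [Field k] [CharZero k] :
    Subalgebra.center k (WeylAlgebra1 k) = ⊥ := by
  open WeylAlgebra1 in
  refine eq_bot_iff.2 fun z hz => ?_
  have hcomm (i : Fin 2) : Commute (polyRep k z) (polyRep k (gen k i)) :=
    (show Commute z (gen k i) from (Subalgebra.mem_center_iff.1 hz (gen k i)).symm).map _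
  have hscalar := Polynomial.eq_algebraMap_of_commute_mulLeft_X_of_commute_derivative
    (by simpa using hcomm 0) (by simpa using hcomm 1)
  exact Algebra.mem_bot.2 ⟨_, polyRep_injective k (by rw [AlgHom.commutes, ← hscalar])⟩
end

section
/- Let δ be a locally nilpotent derivation of a k-algebra A, where k has characteristic zero and A is a domain. Then ker δ is factorially closed: if a, b ∈ A are nonzero and ab ∈ ker δ, then a, b ∈ ker δ. -/
universe u

open Finset

lemma iterate_deriv_mul {k A : Type u} [Field k] [CommRing A] [Algebra k A]
    (δ : Derivation k A A) (p q : A) (n : ℕ) :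
    (⇑δ)^[n] (p * q) =
      ∑ i ∈ range (n + 1), n.choose i • ((⇑δ)^[n - i] p * (⇑δ)^[i] q) := by
  induction n with
  | zero => simp
  | succ n IH =>
    calc
      (⇑δ)^[n + 1] (p * q) =
          δ (∑ i ∈ range (n + 1),
              n.choose i • ((⇑δ)^[n - i] p * (⇑δ)^[i] q)) := by
        rw [Function.iterate_succ_apply', IH]
      _ = (∑ i ∈ range (n + 1),
            n.choose i • ((⇑δ)^[n - i + 1] p * (⇑δ)^[i] q)) +
          ∑ i ∈ range (n + 1),
            n.choose i • ((⇑δ)^[n - i] p * (⇑δ)^[i + 1] q) := by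
        rw [map_sum, ← sum_add_distrib]
        refine sum_congr rfl fun i _ => ?_
        rw [map_nsmul, Derivation.leibniz, smul_eq_mul, smul_eq_mul,
          Function.iterate_succ_apply', Function.iterate_succ_apply', smul_add]
        ring_nf
      _ = (∑ i ∈ range (n + 1),
                n.choose i.succ • ((⇑δ)^[n - i] p * (⇑δ)^[i + 1] q)) +
              1 • ((⇑δ)^[n + 1] p * (⇑δ)^[0] q) +
            ∑ i ∈ range (n + 1), n.choose i • ((⇑δ)^[n - i] p * (⇑δ)^[i + 1] q) :=
        ?_
      _ = ((∑ i ∈ range (n + 1), n.choose i • ((⇑δ)^[n - i] p * (⇑δ)^[i + 1] q)) +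
              ∑ i ∈ range (n + 1),
                n.choose i.succ • ((⇑δ)^[n - i] p * (⇑δ)^[i + 1] q)) +
            1 • ((⇑δ)^[n + 1] p * (⇑δ)^[0] q) := by
        rw [add_comm, add_assoc]
      _ = (∑ i ∈ range (n + 1),
              (n + 1).choose (i + 1) • ((⇑δ)^[n + 1 - (i + 1)] p * (⇑δ)^[i + 1] q)) +
            1 • ((⇑δ)^[n + 1] p * (⇑δ)^[0] q) := by
        simp_rw [Nat.choose_succ_succ, Nat.succ_sub_succ, add_smul, sum_add_distrib]
      _ = ∑ i ∈ range (n + 1 + 1),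
            (n + 1).choose i • ((⇑δ)^[n + 1 - i] p * (⇑δ)^[i] q) := by
        rw [sum_range_succ' _ (n + 1), Nat.choose_zero_right, tsub_zero]
    congr 1
    refine (sum_range_succ' _ _).trans (congr_arg₂ (· + ·) ?_ ?_)
    · rw [sum_range_succ, Nat.choose_succ_self, zero_smul, add_zero]
      refine sum_congr rfl fun i hi => ?_
      rw [mem_range] at hi
      have h1 : n - (i + 1) + 1 = n - i := by omega
      rw [h1]
    · rw [Nat.choose_zero_right, tsub_zero]

/-- Over a field of characteristic zero, the kernel of a locally nilpotent derivation
of a commutative domain is factorially closed: if `δ(ab) = 0` with `a, b ≠ 0`,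
then `δ a = 0` and `δ b = 0`. -/
theorem ker_LND_factorially_closed
    (k A : Type u) [Field k] [CharZero k] [CommRing A] [IsDomain A] [Algebra k A]
    (δ : Derivation k A A) (hδ : ∀ x : A, ∃ n : ℕ, (⇑δ)^[n] x = 0)
    (a b : A) (ha : a ≠ 0) (hb : b ≠ 0) (hab : δ (a * b) = 0) :
    δ a = 0 ∧ δ b = 0 := by
  haveI : CharZero A := charZero_of_injective_algebraMap (algebraMap k A).injective
  -- degrees
  have hfind : ∀ x : A, x ≠ 0 → ∃ n : ℕ, (⇑δ)^[n] x ≠ 0 ∧ (⇑δ)^[n + 1] x = 0 := by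
    intro x hx
    obtain ⟨n, hn⟩ := hδ x
    have hne : ∃ m, (⇑δ)^[m] x = 0 := ⟨n, hn⟩
    classical
    set m := Nat.find hne with hm
    have hm0 : (⇑δ)^[m] x = 0 := Nat.find_spec hne
    have hmpos : m ≠ 0 := by
      intro h
      rw [h] at hm0
      exact hx hm0
    obtain ⟨p, hp⟩ := Nat.exists_eq_succ_of_ne_zero hmpos
    rw [hp] at hm0
    refine ⟨p, Nat.find_min hne ?_, hm0⟩
    rw [← hm, hp]
    exact Nat.lt_succ_self p
  obtain ⟨p, hp1, hp2⟩ := hfind a ha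
  obtain ⟨q, hq1, hq2⟩ := hfind b hb
  -- iterates above the index of vanishing vanish
  have hstab : ∀ (x : A) (m : ℕ), (⇑δ)^[m] x = 0 → ∀ j, m ≤ j → (⇑δ)^[j] x = 0 := by
    intro x m hm j hj
    obtain ⟨i, rfl⟩ := Nat.exists_eq_add_of_le hj
    rw [add_comm, Function.iterate_add_apply, hm]
    exact Function.iterate_fixed (map_zero δ) i
  -- compute δ^[p+q] (a*b)
  have key : (⇑δ)^[p + q] (a * b) = (p + q).choose q • ((⇑δ)^[p] a * (⇑δ)^[q] b) := by
    rw [iterate_deriv_mul]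
    rw [Finset.sum_eq_single q]
    · rw [Nat.add_sub_cancel]
    · intro i hi hiq
      rw [mem_range] at hi
      rcases lt_or_gt_of_ne hiq with h | h
      · have : (⇑δ)^[p + q - i] a = 0 := hstab a (p + 1) hp2 _ (by omega)
        rw [this, zero_mul, smul_zero]
      · have : (⇑δ)^[i] b = 0 := hstab b (q + 1) hq2 _ (by omega)
        rw [this, mul_zero, smul_zero]
    · intro h
      exact absurd (mem_range.mpr (by omega)) h
  have hne : (⇑δ)^[p + q] (a * b) ≠ 0 := by
    rw [key]
    have hc : ((p + q).choose q : A) ≠ 0 :=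
      Nat.cast_ne_zero.mpr (Nat.choose_pos (Nat.le_add_left q p)).ne'
    rw [nsmul_eq_mul]
    exact mul_ne_zero hc (mul_ne_zero hp1 hq1)
  -- but if p + q ≥ 1, δ^[p+q](ab) = 0
  have hpq : p + q = 0 := by
    by_contra h
    have h1 : 1 ≤ p + q := by omega
    have : (⇑δ)^[p + q] (a * b) = 0 := hstab (a * b) 1 (by simpa using hab) _ h1
    exact hne this
  have hp0 : p = 0 := by omega
  have hq0 : q = 0 := by omega
  subst hp0; subst hq0
  constructor
  · simpa using hp2
  · simpa using hq2
end

section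
/- Let p be a prime and let K = F_p(x_1,...,x_{p²−1}) with k = F_p(x_1^p,...,x_{p²−1}^p). Let δ be the k-linear derivation of K with δ(x_i) = x_{i+1} (indices mod p²−1, so x_{p²} = x_1). Then δ^{p²} = δ, i.e., δ^{p^{j+2}} = δ^{p^j} for all j ≥ 0. -/
/-!
In characteristic `p` all middle binomial coefficients of the iterated Leibniz rule
`D^n (ab) = ∑ (n choose i) D^i a · D^(n-i) b` vanish for `n = p`, so `δ^p`, and hence `δ^(p²)`,
is again a derivation. By the quotient rule a derivation of `K` is determined by its values on
`x_1, …, x_{p²-1}`, and `δ^(p²) x_i = δ^(p²-1) x_{i+1} = x_{i+1}` because `δ` shifts indices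
cyclically with period `p² - 1`. Hence `δ^(p²) = δ`.
-/

universe u

open MvPolynomial

/-- The rational function field `K = F_p(x₁,…,x_{p²-1})`. -/
abbrev RatField (p : ℕ) : Type :=
  FractionRing (MvPolynomial (Fin (p ^ 2 - 1)) (ZMod p))

/-- The generator `x_i` of `K = F_p(x₁,…,x_{p²-1})`. -/
noncomputable def xgen (p : ℕ) (i : Fin (p ^ 2 - 1)) : RatField p :=
  algebraMap (MvPolynomial (Fin (p ^ 2 - 1)) (ZMod p)) (RatField p) (X i)

namespace Derivation

open Finset

variable {R A : Type*} [CommSemiring R] [CommSemiring A] [Algebra R A]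

theorem iterate_apply_mul (D : Derivation R A A) (n : ℕ) (a b : A) :
    D^[n] (a * b) = ∑ ij ∈ antidiagonal n, n.choose ij.1 • (D^[ij.1] a * D^[ij.2] b) := by
  induction n with
  | zero => simp
  | succ n ih =>
    rw [sum_antidiagonal_choose_succ_nsmul (M := A) (fun i j => D^[i] a * D^[j] b) n]
    simp only [Function.iterate_succ_apply', ih, map_sum, map_nsmul, leibniz, smul_eq_mul,
      smul_add, sum_add_distrib]
    congr 1
    refine sum_congr rfl fun ij hij => ?_
    rw [n.choose_symm_of_eq_add (HasAntidiagonal.mem_antidiagonal.1 hij).symm, mul_comm]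

theorem iterate_char_apply_mul (p : ℕ) [hp : Fact p.Prime] [CharP A p] (D : Derivation R A A)
    (a b : A) :
    D^[p] (a * b) = a * D^[p] b + b * D^[p] a := by
  rw [D.iterate_apply_mul, sum_eq_add_of_mem (0, p) (p, 0) (by simp) (by simp)
    (by simp [hp.out.ne_zero])]
  · simp [mul_comm]
  · rintro ⟨i, j⟩ hij hij0
    simp only [HasAntidiagonal.mem_antidiagonal, ne_eq, Prod.mk.injEq] at hij hij0
    have hi0 : i ≠ 0 := by omega
    have hip : i < p := by omega
    rw [nsmul_eq_mul, (CharP.cast_eq_zero_iff A p _).2 (hp.out.dvd_choose_self hi0 hip), zero_mul]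

def iterateChar (p : ℕ) [hp : Fact p.Prime] [CharP A p] (D : Derivation R A A) :
    Derivation R A A where
  toLinearMap := (D : A →ₗ[R] A) ^ p
  map_one_eq_zero' := by
    obtain ⟨n, hn⟩ := Nat.exists_eq_succ_of_ne_zero hp.out.ne_zero
    rw [Module.End.coe_pow, coeFn_coe, hn, Function.iterate_succ_apply, map_one_eq_zero,
      iterate_map_zero]
  leibniz' a b := by
    simpa only [Module.End.coe_pow, coeFn_coe, smul_eq_mul] using D.iterate_char_apply_mul p a b

@[simp]
theorem coe_iterateChar (p : ℕ) [Fact p.Prime] [CharP A p] (D : Derivation R A A) :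
    ⇑(D.iterateChar p) = D^[p] :=
  Module.End.coe_pow _ _

def iterateCharPow (p : ℕ) [Fact p.Prime] [CharP A p] (n : ℕ) (D : Derivation R A A) :
    Derivation R A A :=
  (iterateChar p)^[n] D

@[simp]
theorem coe_iterateCharPow (p : ℕ) [Fact p.Prime] [CharP A p] (n : ℕ) (D : Derivation R A A) :
    ⇑(D.iterateCharPow p n) = D^[p ^ n] := by
  induction n with
  | zero => rfl
  | succ n ih =>
    rw [iterateCharPow, Function.iterate_succ_apply', coe_iterateChar, ← iterateCharPow, ih,
      ← Function.iterate_mul, pow_succ]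

end Derivation

theorem IsFractionRing.derivation_ext {R A K : Type*} [CommRing R] [CommRing A] [Field K]
    [Algebra R A] [Algebra R K] [Algebra A K] [IsScalarTower R A K] [IsFractionRing A K]
    {D₁ D₂ : Derivation R K K} (h : D₁.compAlgebraMap A = D₂.compAlgebraMap A) : D₁ = D₂ := by
  have h' (a : A) : D₁ (algebraMap A K a) = D₂ (algebraMap A K a) := DFunLike.congr_fun h a
  ext z
  obtain ⟨a, b, -, rfl⟩ := IsFractionRing.div_surjective A z
  rw [Derivation.leibniz_div, Derivation.leibniz_div, h', h']

open Fin.NatCast in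
theorem Function.iterate_apply_of_apply_eq_succ {α : Type*} {m : ℕ} [NeZero m] {g : α → α}
    {f : Fin m → α} (h : ∀ i, g (f i) = f (i + 1)) (n : ℕ) (i : Fin m) :
    g^[n] (f i) = f (i + n) := by
  induction n generalizing i with
  | zero => simp
  | succ n ih =>
    rw [Function.iterate_succ_apply, h, ih, Nat.cast_succ, add_comm (n : Fin m), add_assoc]

set_option maxHeartbeats 1000000 in
/-- Let `K = F_p(x₁,…,x_{p²-1})` and let `δ` be the (automatically `k`-linear, where
`k = F_p(x₁^p,…,x_{p²-1}^p)`) derivation with `δ(x_i) = x_{i+1}` cyclically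
(indices taken mod `p² - 1`, so `x_{p²} = x₁`).  Then `δ^{p^{j+2}} = δ^{p^j}`
for all `j ≥ 0`; in particular `δ^{p²} = δ`. -/
theorem cyclic_derivation_pow_periodic
    (p : ℕ) [Fact p.Prime] [NeZero (p ^ 2 - 1)]
    (δ : Derivation (ZMod p) (RatField p) (RatField p))
    (hδ : ∀ i : Fin (p ^ 2 - 1), δ (xgen p i) = xgen p (i + 1)) :
    (∀ j : ℕ, (⇑δ)^[p ^ (j + 2)] = (⇑δ)^[p ^ j]) ∧ (⇑δ)^[p ^ 2] = ⇑δ := by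
  have hcycle (i : Fin (p ^ 2 - 1)) : (⇑δ)^[p ^ 2] (xgen p i) = δ (xgen p i) := by
    have hp2 : p ^ 2 = (p ^ 2 - 1) + 1 := by have := NeZero.ne (p ^ 2 - 1); omega
    -- a plain `rw [hp2]` would also hit the `p ^ 2` inside the type `RatField p`
    rw [congrArg (fun n => (⇑δ)^[n]) hp2, Function.iterate_succ_apply, hδ,
      Function.iterate_apply_of_apply_eq_succ hδ, Fin.natCast_self, add_zero]
  have hD : δ.iterateCharPow p 2 = δ :=
    IsFractionRing.derivation_ext <| MvPolynomial.derivation_ext fun i => by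
      change δ.iterateCharPow p 2 (xgen p i) = δ (xgen p i)
      rw [Derivation.coe_iterateCharPow, hcycle]
  have hperiod : (⇑δ)^[p ^ 2] = ⇑δ := by rw [← Derivation.coe_iterateCharPow, hD]
  exact ⟨fun j => by rw [pow_add, mul_comm, Function.iterate_mul, hperiod], hperiod⟩
end

section
/- Let K be a field of characteristic p > 0 and δ a derivation of K such that δ^{p²} = δ. Then in the Ore extension A = K[x; δ], the element z = x^{p²} − x is central. -/
universe u

/-!
Write `ad x` for `y ↦ x * y - y * x`. Left and right multiplication by `x` commute, so in
characteristic `p` Frobenius gives `ad (x ^ p ^ n) = (ad x) ^ p ^ n`. The relation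
`x * a - a * x = δ a` makes `ad x` restrict to `δ` on `K`, hence `ad (x ^ p²)` restricts to
`δ ^ p² = δ`, so `x ^ p² - x` commutes with `K`; it commutes with `x` trivially, and `K`
together with `x` generates the ring.
-/

theorem Subring.mem_center_of_commute_of_forall_mem_closure {R : Type*} [Ring R] {s : Set R}
    (hs : ∀ a, a ∈ Subring.closure s) {z : R} (hz : ∀ a ∈ s, Commute a z) :
    z ∈ Subring.center R :=
  Subring.mem_center_iff.mpr fun g => Eq.symm <|
    Subring.closure_le.mpr (fun a ha => Subring.mem_centralizer_iff.mpr
      fun _ hb => (Set.mem_singleton_iff.mp hb) ▸ (hz a ha).symm.eq) (hs g) z rfl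

theorem Commute.add_pow_prime_pow_of_natCast_eq_zero {R : Type*} [Ring R] {p : ℕ}
    (hp : p.Prime) (hpR : (p : R) = 0) {a b : R} (h : Commute a b) (n : ℕ) :
    (a + b) ^ p ^ n = a ^ p ^ n + b ^ p ^ n := by
  obtain ⟨r, hr⟩ := h.exists_add_pow_prime_pow_eq hp n
  rwa [hpR, zero_mul, zero_mul, zero_mul, add_zero] at hr

open LinearMap in
theorem pow_prime_pow_mul_sub_mul_eq_iterate {A : Type*} [Ring A] {p : ℕ} (hp : p.Prime)
    (hpA : (p : A) = 0) (x y : A) (n : ℕ) :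
    x ^ p ^ n * y - y * x ^ p ^ n = (fun z => x * z - z * x)^[p ^ n] y := by
  have hp_end : (p : Module.End ℤ A) = 0 := by
    ext v
    simp [hpA]
  have hfrob := Commute.add_pow_prime_pow_of_natCast_eq_zero hp hp_end
    ((commute_mulLeft_right (R := ℤ) x x).sub_left (Commute.refl _)) n
  rw [sub_add_cancel, pow_mulLeft, pow_mulRight, eq_comm, ← eq_sub_iff_add_eq] at hfrob
  calc x ^ p ^ n * y - y * x ^ p ^ n = (mulLeft ℤ (x ^ p ^ n) - mulRight ℤ (x ^ p ^ n)) y := rfl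
    _ = ((mulLeft ℤ x - mulRight ℤ x) ^ p ^ n) y := by rw [hfrob]
    _ = _ := Module.End.pow_apply _ _ _

/-- Let `K` be a field of characteristic `p > 0` and `δ` a derivation of `K` with
`δ^{p²} = δ`.  In the Ore extension `A = K[x; δ]` — presented here as a ring `A`
containing `K` via `f`, generated by `f(K)` and an element `x` subject to
`x·a = a·x + δ(a)` — the element `z = x^{p²} - x` is central. -/
theorem ore_extension_central_element
    (p : ℕ) (hp : p.Prime) (K A : Type u) [Field K] [CharP K p] [Ring A]
    (δ : Derivation ℤ K K) (hδ : (⇑δ)^[p ^ 2] = ⇑δ)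
    (f : K →+* A) (x : A)
    (hcomm : ∀ a : K, x * f a = f a * x + f (δ a))
    (hgen : ∀ a : A, a ∈ Subring.closure (Set.range f ∪ {x})) :
    x ^ p ^ 2 - x ∈ Subring.center A := by
  have hpA : (p : A) = 0 := by rw [← map_natCast f, CharP.cast_eq_zero K p, map_zero]
  have hsemiconj : Function.Semiconj f δ (fun z => x * z - z * x) := fun a => by
    show f (δ a) = x * f a - f a * x
    rw [hcomm a, add_sub_cancel_left]
  have hK : ∀ a : K, x ^ p ^ 2 * f a - f a * x ^ p ^ 2 = x * f a - f a * x := fun a => by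
    rw [pow_prime_pow_mul_sub_mul_eq_iterate hp hpA, ← (hsemiconj.iterate_right _).eq, hδ,
      hsemiconj.eq]
  refine Subring.mem_center_of_commute_of_forall_mem_closure hgen ?_
  rintro _ (⟨a, rfl⟩ | hx)
  · show f a * _ = _ * f a
    rw [mul_sub, sub_mul]
    exact (sub_eq_sub_iff_sub_eq_sub.mp (hK a)).symm
  · rw [Set.mem_singleton_iff.mp hx]
    exact ((Commute.refl x).pow_right _).sub_right (Commute.refl x)
end

section
/- Let A be a commutative k-domain such that every k-algebra automorphism-free condition holds in the following sense: ML(A[t]) = A. Then A is cancellative: any k-algebra isomorphism A[t] ≅ B[t] implies A ≅ B. -/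
/-!
A locally nilpotent derivation of `A[t]` transported along `φ : A[t] ≃ B[t]` is locally
nilpotent, so `φ` maps `ML(A[t]) = A` into `ML(B[t])`, which lies in the kernel of `d/dt`,
i.e. in `B`. Hence `φ` restricts to an injective algebra map `ψ : A → B`, and `φ` is the
substitution `p ↦ (p.map ψ).comp (φ t)`. Comparing degrees, `φ t` has degree one and every
`φ⁻¹ (C b)` is constant, so `ψ` is also surjective.
-/

open Polynomial

universe u

/-- The Makar-Limanov invariant of a commutative `k`-algebra `R`, as a set:
the intersection of the kernels of all locally nilpotent derivations. -/
def MLSet (k R : Type u) [CommRing k] [CommRing R] [Algebra k R] : Set R :=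
  {x : R | ∀ δ : Derivation k R R, (∀ a : R, ∃ n : ℕ, (⇑δ)^[n] a = 0) → δ x = 0}

abbrev Ring.toCommRingOfInjective {B R : Type*} [Ring B] [CommRing R] (f : B →+* R)
    (hf : Function.Injective f) : CommRing B :=
  { ‹Ring B› with mul_comm := fun a b => hf (by rw [map_mul, map_mul, mul_comm]) }

namespace Derivation

variable {k P Q : Type*} [CommRing k] [CommRing P] [CommRing Q] [Algebra k P] [Algebra k Q]

def IsLocallyNilpotent (δ : Derivation k P P) : Prop :=
  ∀ a : P, ∃ n : ℕ, (⇑δ)^[n] a = 0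

def conj (φ : P ≃ₐ[k] Q) (δ : Derivation k Q Q) : Derivation k P P where
  toFun p := φ.symm (δ (φ p))
  map_add' p q := by simp
  map_smul' c p := by simp
  map_one_eq_zero' := by simp
  leibniz' p q := by
    change φ.symm (δ (φ (p * q))) = p • φ.symm (δ (φ q)) + q • φ.symm (δ (φ p))
    simp only [map_mul, leibniz, smul_eq_mul, map_add, AlgEquiv.symm_apply_apply]

@[simp]
lemma conj_apply (φ : P ≃ₐ[k] Q) (δ : Derivation k Q Q) (p : P) :
    conj φ δ p = φ.symm (δ (φ p)) := rfl

lemma iterate_conj_apply (φ : P ≃ₐ[k] Q) (δ : Derivation k Q Q) (n : ℕ) (p : P) :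
    (⇑(conj φ δ))^[n] p = φ.symm ((⇑δ)^[n] (φ p)) := by
  induction n generalizing p with
  | zero => simp
  | succ n ih => simp [Function.iterate_succ_apply, ih]

lemma IsLocallyNilpotent.conj {δ : Derivation k Q Q} (hδ : δ.IsLocallyNilpotent)
    (φ : P ≃ₐ[k] Q) : (Derivation.conj φ δ).IsLocallyNilpotent := fun p => by
  obtain ⟨n, hn⟩ := hδ (φ p)
  exact ⟨n, by rw [iterate_conj_apply, hn, map_zero]⟩

end Derivation

lemma Polynomial.isLocallyNilpotent_derivative (k B : Type*) [CommRing k] [CommRing B]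
    [Algebra k B] : ((derivative' (R := B)).restrictScalars k).IsLocallyNilpotent := fun p =>
  ⟨p.natDegree + 1, iterate_derivative_eq_zero p.natDegree.lt_succ_self⟩

section MakarLimanov

variable {k P Q : Type u} [CommRing k] [CommRing P] [CommRing Q] [Algebra k P] [Algebra k Q]

lemma map_mem_MLSet (φ : P ≃ₐ[k] Q) {x : P} (hx : x ∈ MLSet k P) : φ x ∈ MLSet k Q := by
  intro δ hδ
  have h := hx (Derivation.conj φ δ) (Derivation.IsLocallyNilpotent.conj hδ φ)
  rw [Derivation.conj_apply] at h
  exact φ.symm.injective (by rw [h, map_zero])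

lemma MLSet_polynomial_subset_range_C [IsAddTorsionFree Q] :
    MLSet k Q[X] ⊆ Set.range (C : Q → Q[X]) := fun p hp => by
  have h : derivative p = 0 := hp _ (isLocallyNilpotent_derivative k Q)
  exact ⟨p.coeff 0, (eq_C_of_natDegree_eq_zero (derivative_eq_zero.mp h)).symm⟩

end MakarLimanov

namespace AlgEquiv

variable {k A B : Type*} [CommRing k] [CommRing A] [CommRing B] [Algebra k A] [Algebra k B]
variable (φ : A[X] ≃ₐ[k] B[X])

noncomputable def constantCoeffHom : A →ₐ[k] B :=
  ((aeval (0 : B)).restrictScalars k).comp (φ.toAlgHom.comp CAlgHom)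

variable {φ} (hφ : ∀ a : A, φ (C a) ∈ Set.range (C : B → B[X]))
include hφ

lemma C_constantCoeffHom (a : A) : C (φ.constantCoeffHom a) = φ (C a) := by
  obtain ⟨b, hb⟩ := hφ a
  simp [constantCoeffHom, ← hb]

lemma constantCoeffHom_injective : Function.Injective φ.constantCoeffHom := fun x y hxy =>
  C_injective <| φ.injective <| by
    rw [← C_constantCoeffHom hφ, ← C_constantCoeffHom hφ, hxy]

lemma apply_eq_map_comp (p : A[X]) : φ p = (p.map φ.constantCoeffHom).comp (φ X) := by
  have h : (φ : A[X] →+* B[X]) = eval₂RingHom (C.comp φ.constantCoeffHom.toRingHom) (φ X) :=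
    ringHom_ext (fun a => by simp [C_constantCoeffHom hφ]) (by simp)
  rw [comp, eval₂_map]
  exact congr($h p)

variable [IsDomain B]

lemma natDegree_apply (p : A[X]) : (φ p).natDegree = p.natDegree * (φ X).natDegree := by
  rw [apply_eq_map_comp hφ, natDegree_comp,
    natDegree_map_eq_of_injective (f := (φ.constantCoeffHom : A →+* B))
      (constantCoeffHom_injective hφ)]

lemma natDegree_apply_X_ne_zero : (φ X).natDegree ≠ 0 := fun h => by
  have := natDegree_apply hφ (φ.symm X)
  rw [apply_symm_apply, h, mul_zero, natDegree_X] at this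
  exact one_ne_zero this

lemma constantCoeffHom_surjective : Function.Surjective φ.constantCoeffHom := fun b => by
  have h := natDegree_apply hφ (φ.symm (C b))
  rw [apply_symm_apply, natDegree_C, eq_comm, mul_eq_zero,
    or_iff_left (natDegree_apply_X_ne_zero hφ)] at h
  obtain ⟨a, ha⟩ := natDegree_eq_zero.mp h
  exact ⟨a, C_injective <| by rw [C_constantCoeffHom hφ, ha, apply_symm_apply]⟩

noncomputable def ofPolynomialEquivPreservingConstants : A ≃ₐ[k] B :=
  ofBijective φ.constantCoeffHom ⟨constantCoeffHom_injective hφ, constantCoeffHom_surjective hφ⟩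

end AlgEquiv

theorem cancellative_of_ML_poly_eq_general
    (k A : Type u) [Field k] [CharZero k] [CommRing A] [IsDomain A] [Algebra k A]
    (hML : MLSet k (Polynomial A) = Set.range (C : A → Polynomial A)) :
    ∀ (B : Type u) [Ring B] [Algebra k B],
      Nonempty (Polynomial A ≃ₐ[k] Polynomial B) → Nonempty (A ≃ₐ[k] B) := by
  intro B _ _ ⟨φ⟩
  have hj : Function.Injective (φ.symm.toRingHom.comp C) := φ.symm.injective.comp C_injective
  let : CommRing B := Ring.toCommRingOfInjective _ hj
  have : IsDomain B := hj.isDomain _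
  have : CharZero B := charZero_of_injective_algebraMap (algebraMap k B).injective
  have hφ (a : A) : φ (C a) ∈ Set.range (C : B → B[X]) :=
    MLSet_polynomial_subset_range_C (map_mem_MLSet φ (hML ▸ ⟨a, rfl⟩))
  exact ⟨AlgEquiv.ofPolynomialEquivPreservingConstants hφ⟩

/-- Let `A` be an affine commutative `k`-domain (characteristic zero) with
`ML(A[t]) = A`.  Then `A` is cancellative: any `k`-algebra isomorphism
`A[t] ≅ B[t]` implies `A ≅ B`. -/
theorem cancellative_of_ML_poly_eq
    (k A : Type u) [Field k] [CharZero k] [CommRing A] [IsDomain A] [Algebra k A]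
    (hfg : Algebra.FiniteType k A)
    (hML : MLSet k (Polynomial A) = Set.range (C : A → Polynomial A)) :
    ∀ (B : Type u) [Ring B] [Algebra k B],
      Nonempty (Polynomial A ≃ₐ[k] Polynomial B) → Nonempty (A ≃ₐ[k] B) :=
  cancellative_of_ML_poly_eq_general k A hML
end
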